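/- arXiv:2406.06148 — 2 statements merged into one kernel-verified Lean document; each statement's English description precedes it below -/
import Mathlib

section
/- Let $L \subseteq \overline{\mathbb{Q}}$ be a totally imaginary number field and $\Phi$ a CM-type of $L$ lifted from a CM-subfield. Let $(w_\sigma)_{\sigma \in J_L}$ be a system of lifts, i.e. elements $w_\sigma \in G_{\mathbb{Q}}$ with $w_\sigma|_L = \sigma$ and $c\, w_\sigma = w_{c \circ \sigma}$ for all $\sigma \in J_L$. Then: (a) for every $\tau \in G_{\mathbb{Q}}$ and $\sigma \in J_L$, the element $w_{\tau\circ\sigma}^{-1} \tau w_\sigma$ lies in $G_L$; (b) the class $\mathrm{tr}_{L,\Phi}(\tau) = \prod_{\sigma \in \Phi} (w_{\tau\circ\sigma}^{-1} \tau w_\sigma)^{-1} \bmod G_L^c$ in $G_L^{\mathrm{ab}}$ is independent of the order of the product and independent of the choice of system of lifts $(w_\sigma)$; (c) the resulting map $\mathrm{tr}_{L,\Phi} : G_{\mathbb{Q}} \to G_L^{\mathrm{ab}}$ is continuous. -/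
/-!
STATEMENT 2: Let `L ⊆ ℚ̄` be a totally imaginary number field and `Φ` a CM-type of `L`
lifted from a CM-subfield.  Let `(w_σ)_{σ ∈ J_L}` be a system of lifts: `w_σ ∈ G_ℚ`
with `w_σ|_L = σ` and `c w_σ = w_{c∘σ}`.  Then:
(a) for every `τ ∈ G_ℚ` and `σ ∈ J_L`, the element `w_{τ∘σ}⁻¹ τ w_σ` lies in `G_L`;
(b) the class `tr_{L,Φ}(τ) = ∏_{σ ∈ Φ} (w_{τ∘σ}⁻¹ τ w_σ)⁻¹ mod G_L^c` in `G_L^{ab}` is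
    independent of the order of the product (automatic, since the product is formed in
    the abelian group `G_L^{ab} = G_L / G_L^c`) and of the choice of the system of
    lifts;
(c) the map `tr_{L,Φ} : G_ℚ → G_L^{ab}` is continuous.

Here `G_L = Gal(ℚ̄/L)` (with the Krull topology), `G_L^c` is the topological closure of
its commutator subgroup, and `G_L^{ab} = G_L / G_L^c`.  `ℚ̄` is an algebraic closure of
`ℚ` equipped with an embedding `emb` into `ℂ`, and `c` is complex conjugation
restricted to `ℚ̄`.
-/

open scoped Classical

variable {Qbar : Type*} [Field Qbar] [Algebra ℚ Qbar]

/-- the action of `Gal(ℚ̄/ℚ)` on embeddings `F ↪ ℚ̄`, by composition -/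
def gact {F : IntermediateField ℚ Qbar} (τ : Qbar ≃ₐ[ℚ] Qbar) (σ : ↥F →+* Qbar) :
    ↥F →+* Qbar :=
  (τ : Qbar →ₐ[ℚ] Qbar).toRingHom.comp σ

section CM

variable (c : Qbar ≃ₐ[ℚ] Qbar)

/-- `K` is a CM-field. -/
def IsCMField (K : IntermediateField ℚ Qbar) : Prop :=
  ∃ cK : ↥K ≃+* ↥K, cK ≠ RingEquiv.refl ↥K ∧
    ∀ (σ : ↥K →+* Qbar) (x : ↥K), σ (cK x) = c (σ x)

/-- `Φ` is a CM-type of `K`. -/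
def IsCMType {K : IntermediateField ℚ Qbar} (Φ : Set (↥K →+* Qbar)) : Prop :=
  Φ ∩ (gact c '' Φ) = ∅ ∧ Φ ∪ (gact c '' Φ) = Set.univ

/-- the inclusion `K → L` of intermediate fields, as a ring homomorphism -/
def incl {K L : IntermediateField ℚ Qbar} (hKL : K ≤ L) : ↥K →+* ↥L where
  toFun x := ⟨x.1, hKL x.2⟩
  map_one' := rfl
  map_mul' _ _ := rfl
  map_zero' := rfl
  map_add' _ _ := rfl

/-- the lift to `L` of a set of embeddings of a subfield `K ⊆ L` -/
def liftType {K L : IntermediateField ℚ Qbar} (hKL : K ≤ L)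
    (ΦK : Set (↥K →+* Qbar)) : Set (↥L →+* Qbar) :=
  {σ | σ.comp (incl hKL) ∈ ΦK}

/-- `Φ` is a CM-type of `L` lifted from a CM-subfield of `L`. -/
def IsLiftedCMType (L : IntermediateField ℚ Qbar) (Φ : Set (↥L →+* Qbar)) : Prop :=
  ∃ (K : IntermediateField ℚ Qbar) (hKL : K ≤ L) (ΦK : Set (↥K →+* Qbar)),
    IsCMField c K ∧ IsCMType c ΦK ∧ Φ = liftType hKL ΦK

/-- `L` is totally imaginary. -/
def TotallyImaginary (L : IntermediateField ℚ Qbar) : Prop :=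
  ∀ σ : ↥L →+* Qbar, gact c σ ≠ σ

/-- a system of lifts for `L`: `w_σ|_L = σ` and `c ∘ w_σ = w_{c∘σ}` -/
def IsLiftSystem (L : IntermediateField ℚ Qbar)
    (w : (↥L →+* Qbar) → (Qbar ≃ₐ[ℚ] Qbar)) : Prop :=
  (∀ (σ : ↥L →+* Qbar) (x : ↥L), w σ (x : Qbar) = σ x) ∧
  (∀ σ : ↥L →+* Qbar, c * w σ = w (gact c σ))

end CM

/-- (a): `w_{τ∘σ}⁻¹ τ w_σ` fixes `L` pointwise. -/
theorem conj_mem_fixingSubgroup {L : IntermediateField ℚ Qbar}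
    (w : (↥L →+* Qbar) → (Qbar ≃ₐ[ℚ] Qbar))
    (hw : ∀ (σ : ↥L →+* Qbar) (x : ↥L), w σ (x : Qbar) = σ x)
    (τ : Qbar ≃ₐ[ℚ] Qbar) (σ : ↥L →+* Qbar) :
    (w (gact τ σ))⁻¹ * τ * w σ ∈ L.fixingSubgroup := by
  rw [IntermediateField.mem_fixingSubgroup_iff]
  intro x hx
  have h1 : w σ x = σ ⟨x, hx⟩ := hw σ ⟨x, hx⟩
  have h2 : τ (σ ⟨x, hx⟩) = gact τ σ ⟨x, hx⟩ := rfl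
  have h3 : w (gact τ σ) x = gact τ σ ⟨x, hx⟩ := hw (gact τ σ) ⟨x, hx⟩
  calc ((w (gact τ σ))⁻¹ * τ * w σ) x
      = (w (gact τ σ))⁻¹ (τ (w σ x)) := rfl
    _ = (w (gact τ σ))⁻¹ (w (gact τ σ) x) := by rw [h1, h2, ← h3]
    _ = x := by
        rw [show ((w (gact τ σ))⁻¹ : Qbar ≃ₐ[ℚ] Qbar) ((w (gact τ σ)) x)
              = ((w (gact τ σ))⁻¹ * (w (gact τ σ))) x from rfl, inv_mul_cancel]
        rfl

/-- `G_L^c`: the topological closure of the commutator subgroup of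
`G_L = Gal(ℚ̄/L)` (Krull topology). -/
noncomputable def Gc (L : IntermediateField ℚ Qbar) : Subgroup ↥(L.fixingSubgroup) :=
  (commutator ↥(L.fixingSubgroup)).topologicalClosure

instance (L : IntermediateField ℚ Qbar) : (Gc L).Normal :=
  Subgroup.is_normal_topologicalClosure _

/-- `G_L^{ab} = G_L / G_L^c` -/
noncomputable def Gab (L : IntermediateField ℚ Qbar) : Type _ :=
  ↥(L.fixingSubgroup) ⧸ Gc L

noncomputable instance (L : IntermediateField ℚ Qbar) : Group (Gab L) :=
  inferInstanceAs (Group (↥(L.fixingSubgroup) ⧸ Gc L))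

noncomputable instance (L : IntermediateField ℚ Qbar) : TopologicalSpace (Gab L) :=
  inferInstanceAs (TopologicalSpace (↥(L.fixingSubgroup) ⧸ Gc L))

open scoped commutatorElement in
/-- the quotient of a group by a normal subgroup containing the commutator subgroup is
commutative -/
noncomputable def commGroupQuotientOf {G : Type*} [Group G] (N : Subgroup G) [N.Normal]
    (h : commutator G ≤ N) : CommGroup (G ⧸ N) :=
  { (inferInstance : Group (G ⧸ N)) with
    mul_comm := by
      intro a b
      induction a using QuotientGroup.induction_on with | _ x => ?_
      induction b using QuotientGroup.induction_on with | _ y => ?_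
      rw [← QuotientGroup.mk_mul, ← QuotientGroup.mk_mul, QuotientGroup.eq]
      have hmem : ⁅y⁻¹, x⁻¹⁆ ∈ commutator G := by
        rw [commutator_def]
        exact Subgroup.commutator_mem_commutator (Subgroup.mem_top _) (Subgroup.mem_top _)
      have heq : (x * y)⁻¹ * (y * x) = ⁅y⁻¹, x⁻¹⁆ := by
        rw [commutatorElement_def]; group
      rw [heq]; exact h hmem }

noncomputable instance (L : IntermediateField ℚ Qbar) : CommGroup (Gab L) :=
  commGroupQuotientOf (Gc L) (Subgroup.le_topologicalClosure _)

/-- the term `(w_{τ∘σ}⁻¹ τ w_σ)⁻¹ mod G_L^c` of the type transfer -/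
noncomputable def trTerm {L : IntermediateField ℚ Qbar}
    (w : (↥L →+* Qbar) → (Qbar ≃ₐ[ℚ] Qbar))
    (hw : ∀ (σ : ↥L →+* Qbar) (x : ↥L), w σ (x : Qbar) = σ x)
    (τ : Qbar ≃ₐ[ℚ] Qbar) (σ : ↥L →+* Qbar) : Gab L :=
  QuotientGroup.mk
    ((⟨(w (gact τ σ))⁻¹ * τ * w σ, conj_mem_fixingSubgroup w hw τ σ⟩ :
        ↥(L.fixingSubgroup))⁻¹)


section AuxLemmas

@[reducible] noncomputable def instCommGroupGab' (L : IntermediateField ℚ Qbar) : CommGroup (Gab L) :=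
  { (inferInstance : Group (Gab L)) with
    mul_comm := (commGroupQuotientOf (Gc L) (Subgroup.le_topologicalClosure _)).mul_comm }

attribute [local instance] instCommGroupGab'

open scoped Classical

variable {Qbar : Type*} [Field Qbar] [Algebra ℚ Qbar]

lemma gact_gact (τ τ' : Qbar ≃ₐ[ℚ] Qbar) {F : IntermediateField ℚ Qbar}
    (σ : ↥F →+* Qbar) : gact τ (gact τ' σ) = gact (τ * τ') σ := by
  ext x; rfl

lemma gact_one {F : IntermediateField ℚ Qbar} (σ : ↥F →+* Qbar) :
    gact (1 : Qbar ≃ₐ[ℚ] Qbar) σ = σ := by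
  ext x; rfl

lemma gact_inv_gact (τ : Qbar ≃ₐ[ℚ] Qbar) {F : IntermediateField ℚ Qbar}
    (σ : ↥F →+* Qbar) : gact τ⁻¹ (gact τ σ) = σ := by
  rw [gact_gact, inv_mul_cancel, gact_one]

lemma gact_gact_inv (τ : Qbar ≃ₐ[ℚ] Qbar) {F : IntermediateField ℚ Qbar}
    (σ : ↥F →+* Qbar) : gact τ (gact τ⁻¹ σ) = σ := by
  rw [gact_gact, mul_inv_cancel, gact_one]

lemma u_mem {L : IntermediateField ℚ Qbar}
    (w₁ w₂ : (↥L →+* Qbar) → (Qbar ≃ₐ[ℚ] Qbar))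
    (hw₁ : ∀ (σ : ↥L →+* Qbar) (x : ↥L), w₁ σ (x : Qbar) = σ x)
    (hw₂ : ∀ (σ : ↥L →+* Qbar) (x : ↥L), w₂ σ (x : Qbar) = σ x)
    (σ : ↥L →+* Qbar) : (w₂ σ)⁻¹ * w₁ σ ∈ L.fixingSubgroup := by
  rw [IntermediateField.mem_fixingSubgroup_iff]
  intro x hx
  have h1 : w₁ σ x = σ ⟨x, hx⟩ := hw₁ σ ⟨x, hx⟩
  have h2 : w₂ σ x = σ ⟨x, hx⟩ := hw₂ σ ⟨x, hx⟩
  calc ((w₂ σ)⁻¹ * w₁ σ) x = (w₂ σ)⁻¹ (w₁ σ x) := rfl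
    _ = (w₂ σ)⁻¹ (w₂ σ x) := by rw [h1, ← h2]
    _ = x := by
        rw [show ((w₂ σ)⁻¹ : Qbar ≃ₐ[ℚ] Qbar) ((w₂ σ) x)
              = ((w₂ σ)⁻¹ * (w₂ σ)) x from rfl, inv_mul_cancel]
        rfl

/-- products of an involution-invariant function over two transversals agree -/
lemma prod_transversal {X A : Type*} [CommMonoid A] (ι : X → X)
    (hinv : ∀ x, ι (ι x) = x) (S T : Finset X)
    (hS : ∀ x, x ∈ S ↔ ι x ∉ S) (hT : ∀ x, x ∈ T ↔ ι x ∉ T)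
    (f : X → A) (hf : ∀ x, f (ι x) = f x) :
    ∏ x ∈ S, f x = ∏ x ∈ T, f x := by
  classical
  refine Finset.prod_nbij' (fun x => if x ∈ T then x else ι x)
    (fun y => if y ∈ S then y else ι y) ?_ ?_ ?_ ?_ ?_
  · intro a _
    by_cases h : a ∈ T
    · simpa [h]
    · have : ι a ∈ T := by
        by_contra h'
        exact h ((hT a).mpr h')
      simpa [h]
  · intro b _
    by_cases h : b ∈ S
    · simpa [h]
    · have : ι b ∈ S := by
        by_contra h'
        exact h ((hS b).mpr h')
      simpa [h]
  · intro a ha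
    by_cases h : a ∈ T
    · simp [h, ha]
    · have h2 : ι a ∉ S := (hS a).mp ha
      simp [h, h2, hinv]
  · intro b hb
    by_cases h : b ∈ S
    · simp [h, hb]
    · have h2 : ι b ∉ T := (hT b).mp hb
      simp [h, h2, hinv]
  · intro a _
    by_cases h : a ∈ T <;> simp [h, hf]

/-- part (b): independence of the system of lifts -/
lemma tr_indep (c : Qbar ≃ₐ[ℚ] Qbar) (hcc : ∀ x, c (c x) = x)
    (L : IntermediateField ℚ Qbar)
    (Φ : Finset (↥L →+* Qbar)) (hΦ : IsLiftedCMType c L ↑Φ)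
    (w₁ w₂ : (↥L →+* Qbar) → (Qbar ≃ₐ[ℚ] Qbar))
    (h₁ : IsLiftSystem c L w₁) (h₂ : IsLiftSystem c L w₂) (τ : Qbar ≃ₐ[ℚ] Qbar) :
    ∏ σ ∈ Φ, trTerm w₁ h₁.1 τ σ = ∏ σ ∈ Φ, trTerm w₂ h₂.1 τ σ := by
  classical
  obtain ⟨K, hKL, ΦK, ⟨cK, -, hcK⟩, ⟨hdisj, huniv⟩, hΦeq⟩ := hΦ
  have hcc' : ∀ (F : IntermediateField ℚ Qbar) (μ : ↥F →+* Qbar),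
      gact c (gact c μ) = μ := by
    intro F μ; ext x; exact hcc (μ x)
  have hKhalf : ∀ μ : ↥K →+* Qbar, μ ∈ ΦK ↔ gact c μ ∉ ΦK := by
    intro μ
    constructor
    · intro hμ hcμ
      have hmem2 : μ ∈ ΦK ∩ (gact c '' ΦK) := ⟨hμ, ⟨gact c μ, hcμ, hcc' K μ⟩⟩
      rw [hdisj] at hmem2; exact hmem2
    · intro h
      have hmem2 : μ ∈ ΦK ∪ (gact c '' ΦK) := huniv ▸ Set.mem_univ μ
      rcases hmem2 with h' | ⟨ν, hν, hνμ⟩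
      · exact h'
      · exact absurd (show gact c μ ∈ ΦK by rw [← hνμ, hcc']; exact hν) h
  have hmem : ∀ ρ : ↥L →+* Qbar, ρ ∈ Φ ↔ ρ.comp (incl hKL) ∈ ΦK := by
    intro ρ
    rw [← Finset.mem_coe, hΦeq]
    exact Iff.rfl
  have hcomp : ∀ (τ' : Qbar ≃ₐ[ℚ] Qbar) (ρ : ↥L →+* Qbar),
      (gact τ' ρ).comp (incl hKL) = gact τ' (ρ.comp (incl hKL)) := fun _ _ => rfl
  have hS : ∀ ρ, ρ ∈ Φ ↔ gact c ρ ∉ Φ := by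
    intro ρ; rw [hmem, hmem, hcomp]; exact hKhalf _
  set T : Finset (↥L →+* Qbar) := Φ.image (gact τ) with hTdef
  have hTmem : ∀ ρ, ρ ∈ T ↔ gact τ⁻¹ ρ ∈ Φ := by
    intro ρ
    simp only [hTdef, Finset.mem_image]
    constructor
    · rintro ⟨σ, hσ, rfl⟩; rwa [gact_inv_gact]
    · intro h; exact ⟨_, h, gact_gact_inv τ ρ⟩
  have hkey : ∀ ρ : ↥L →+* Qbar,
      (gact τ⁻¹ (gact c ρ)).comp (incl hKL)
        = gact c ((gact τ⁻¹ ρ).comp (incl hKL)) := by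
    intro ρ
    ext x
    have h1 : ρ (incl hKL (cK x)) = c (ρ (incl hKL x)) := hcK (ρ.comp (incl hKL)) x
    have h2 : (τ⁻¹ : Qbar ≃ₐ[ℚ] Qbar) (ρ (incl hKL (cK x)))
        = c ((τ⁻¹ : Qbar ≃ₐ[ℚ] Qbar) (ρ (incl hKL x))) :=
      hcK ((gact τ⁻¹ ρ).comp (incl hKL)) x
    show (τ⁻¹ : Qbar ≃ₐ[ℚ] Qbar) (c (ρ (incl hKL x)))
        = c ((τ⁻¹ : Qbar ≃ₐ[ℚ] Qbar) (ρ (incl hKL x)))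
    rw [← h1, h2]
  have hThalf : ∀ ρ, ρ ∈ T ↔ gact c ρ ∉ T := by
    intro ρ
    rw [hTmem, hTmem, hmem, hmem, hkey]
    exact hKhalf _
  have humem : ∀ σ, (w₂ σ)⁻¹ * w₁ σ ∈ L.fixingSubgroup := u_mem w₁ w₂ h₁.1 h₂.1
  set f : (↥L →+* Qbar) → Gab L := fun σ =>
    (QuotientGroup.mk (⟨(w₂ σ)⁻¹ * w₁ σ, humem σ⟩ : ↥(L.fixingSubgroup)) : Gab L)
    with hfdef
  have hfc : ∀ σ, f (gact c σ) = f σ := by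
    intro σ
    simp only [hfdef]
    congr 1
    refine Subtype.ext ?_
    show (w₂ (gact c σ))⁻¹ * w₁ (gact c σ) = (w₂ σ)⁻¹ * w₁ σ
    rw [← h₁.2 σ, ← h₂.2 σ]
    group
  have hterm : ∀ σ ∈ Φ,
      trTerm w₁ h₁.1 τ σ = trTerm w₂ h₂.1 τ σ * f (gact τ σ) * (f σ)⁻¹ := by
    intro σ _
    have hval : (⟨(w₁ (gact τ σ))⁻¹ * τ * w₁ σ, conj_mem_fixingSubgroup w₁ h₁.1 τ σ⟩ :
          ↥(L.fixingSubgroup)) =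
        (⟨(w₂ (gact τ σ))⁻¹ * w₁ (gact τ σ), humem _⟩ : ↥(L.fixingSubgroup))⁻¹ *
          ⟨(w₂ (gact τ σ))⁻¹ * τ * w₂ σ, conj_mem_fixingSubgroup w₂ h₂.1 τ σ⟩ *
          ⟨(w₂ σ)⁻¹ * w₁ σ, humem σ⟩ := by
      refine Subtype.ext ?_
      show (w₁ (gact τ σ))⁻¹ * τ * w₁ σ =
        ((w₂ (gact τ σ))⁻¹ * w₁ (gact τ σ))⁻¹ * ((w₂ (gact τ σ))⁻¹ * τ * w₂ σ) *
          ((w₂ σ)⁻¹ * w₁ σ)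
      group
    show (QuotientGroup.mk _ : Gab L) = _
    rw [hval]
    simp only [hfdef]
    rw [mul_inv_rev, mul_inv_rev, inv_inv]
    rw [show trTerm w₂ h₂.1 τ σ = (QuotientGroup.mk
        ((⟨(w₂ (gact τ σ))⁻¹ * τ * w₂ σ, conj_mem_fixingSubgroup w₂ h₂.1 τ σ⟩ :
          ↥(L.fixingSubgroup))⁻¹) : Gab L) from rfl]
    rw [QuotientGroup.mk_mul, QuotientGroup.mk_mul, QuotientGroup.mk_inv,
        QuotientGroup.mk_inv]
    have hcomm : ∀ a b : Gab L, a * b = b * a := mul_comm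
    exact hcomm _ _
  calc ∏ σ ∈ Φ, trTerm w₁ h₁.1 τ σ
      = ∏ σ ∈ Φ, (trTerm w₂ h₂.1 τ σ * f (gact τ σ) * (f σ)⁻¹) :=
        Finset.prod_congr rfl hterm
    _ = (∏ σ ∈ Φ, trTerm w₂ h₂.1 τ σ) * (∏ σ ∈ Φ, f (gact τ σ)) *
          (∏ σ ∈ Φ, f σ)⁻¹ := by
        rw [Finset.prod_mul_distrib, Finset.prod_mul_distrib, ← Finset.prod_inv_distrib]
    _ = ∏ σ ∈ Φ, trTerm w₂ h₂.1 τ σ := by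
        have hinj : ∀ x ∈ Φ, ∀ y ∈ Φ, gact τ x = gact τ y → x = y := by
          intro x _ y _ h
          have := congrArg (gact τ⁻¹) h
          rwa [gact_inv_gact, gact_inv_gact] at this
        have himg : ∏ σ ∈ Φ, f (gact τ σ) = ∏ ρ ∈ T, f ρ :=
          (Finset.prod_image hinj).symm
        have htrans : ∏ ρ ∈ T, f ρ = ∏ σ ∈ Φ, f σ :=
          prod_transversal (gact c) (hcc' L) T Φ hThalf hS f hfc
        rw [himg, htrans, mul_inv_cancel_right]

noncomputable instance (L : IntermediateField ℚ Qbar) : IsTopologicalGroup (Gab L) :=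
  inferInstanceAs (IsTopologicalGroup (↥(L.fixingSubgroup) ⧸ Gc L))

lemma continuous_pmap (L : IntermediateField ℚ Qbar) [FiniteDimensional ℚ ↥L] :
    Continuous (fun τ : Qbar ≃ₐ[ℚ] Qbar =>
      if h : τ ∈ L.fixingSubgroup then
        (QuotientGroup.mk (⟨τ, h⟩ : ↥(L.fixingSubgroup)) : Gab L)
      else 1) := by
  have hopen : IsOpen (L.fixingSubgroup : Set (Qbar ≃ₐ[ℚ] Qbar)) :=
    L.fixingSubgroup_isOpen
  have hclosed : IsClosed (L.fixingSubgroup : Set (Qbar ≃ₐ[ℚ] Qbar)) :=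
    Subgroup.isClosed_of_isOpen _ hopen
  rw [continuous_iff_continuousAt]
  intro τ
  by_cases h : τ ∈ L.fixingSubgroup
  · refine ContinuousOn.continuousAt ?_ (hopen.mem_nhds h)
    rw [continuousOn_iff_continuous_restrict]
    have hc2 : Continuous (fun x : (L.fixingSubgroup : Set (Qbar ≃ₐ[ℚ] Qbar)) =>
        (QuotientGroup.mk (⟨x.1, x.2⟩ : ↥(L.fixingSubgroup)) : Gab L)) :=
      QuotientGroup.continuous_mk.comp (Continuous.subtype_mk continuous_subtype_val _)
    convert hc2 using 1
    funext x
    exact dif_pos x.2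
  · refine ContinuousOn.continuousAt ?_ (hclosed.isOpen_compl.mem_nhds h)
    exact continuousOn_const.congr (fun x hx => dif_neg hx)

/-- part (c): continuity of the type transfer -/
lemma tr_continuous (L : IntermediateField ℚ Qbar) [FiniteDimensional ℚ L]
    (Φ : Finset (↥L →+* Qbar))
    (w : (↥L →+* Qbar) → (Qbar ≃ₐ[ℚ] Qbar))
    (hw1 : ∀ (σ : ↥L →+* Qbar) (x : ↥L), w σ (x : Qbar) = σ x) :
    Continuous (fun τ : Qbar ≃ₐ[ℚ] Qbar => ∏ σ ∈ Φ, trTerm w hw1 τ σ) := by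
  classical
  rw [continuous_iff_continuousAt]
  intro τ₀
  have hopen : IsOpen (L.fixingSubgroup : Set (Qbar ≃ₐ[ℚ] Qbar)) :=
    L.fixingSubgroup_isOpen
  have hone : ∀ σ : ↥L →+* Qbar, {τ : Qbar ≃ₐ[ℚ] Qbar | gact τ σ = gact τ₀ σ}
      ∈ nhds τ₀ := by
    intro σ
    rw [mem_nhds_iff]
    refine ⟨(fun g => τ₀ * w σ * g * (w σ)⁻¹) ''
      (L.fixingSubgroup : Set (Qbar ≃ₐ[ℚ] Qbar)), ?_, ?_, ?_⟩
    · rintro τ ⟨g, hg, rfl⟩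
      ext x
      show (τ₀ * w σ * g * (w σ)⁻¹) (σ x) = τ₀ (σ x)
      have h1 : ((w σ)⁻¹ : Qbar ≃ₐ[ℚ] Qbar) (σ x) = (x : Qbar) := by
        rw [← hw1 σ x,
          show ((w σ)⁻¹ : Qbar ≃ₐ[ℚ] Qbar) ((w σ) (x : Qbar))
            = ((w σ)⁻¹ * w σ) (x : Qbar) from rfl, inv_mul_cancel]
        rfl
      have h2 : g (x : Qbar) = (x : Qbar) :=
        (IntermediateField.mem_fixingSubgroup_iff L g).mp hg (x : Qbar) x.2
      calc (τ₀ * w σ * g * (w σ)⁻¹) (σ x)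
          = τ₀ (w σ (g (((w σ)⁻¹ : Qbar ≃ₐ[ℚ] Qbar) (σ x)))) := rfl
        _ = τ₀ (σ x) := by rw [h1, h2, hw1 σ x]
    · have hcomp : (fun g : Qbar ≃ₐ[ℚ] Qbar => τ₀ * w σ * g * (w σ)⁻¹)
          = (fun g => g * (w σ)⁻¹) ∘ (fun g => (τ₀ * w σ) * g) := by
        funext g; simp [mul_assoc]
      rw [hcomp]
      exact ((Homeomorph.mulRight ((w σ)⁻¹)).isOpenMap.comp
        (Homeomorph.mulLeft (τ₀ * w σ)).isOpenMap) _ hopen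
    · exact ⟨1, Subgroup.one_mem _, by group⟩
  have hnb : ∀ᶠ τ in nhds τ₀, ∀ σ ∈ Φ, gact τ σ = gact τ₀ σ :=
    (Filter.eventually_all_finset Φ).mpr (fun σ _ => hone σ)
  set G : (Qbar ≃ₐ[ℚ] Qbar) → Gab L := fun τ =>
    ∏ σ ∈ Φ, (if h : (w (gact τ₀ σ))⁻¹ * τ * w σ ∈ L.fixingSubgroup then
        (QuotientGroup.mk (⟨(w (gact τ₀ σ))⁻¹ * τ * w σ, h⟩ : ↥(L.fixingSubgroup)) : Gab L)
      else 1)⁻¹ with hGdef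
  have hG : Continuous G := by
    refine continuous_finset_prod _ fun σ _ => Continuous.inv ?_
    exact (continuous_pmap L).comp
      ((continuous_const.mul continuous_id).mul continuous_const)
  refine hG.continuousAt.congr_of_eventuallyEq (hnb.mono ?_)
  intro τ hτ
  simp only [hGdef]
  refine Finset.prod_congr rfl fun σ hσ => ?_
  have hρ : gact τ₀ σ = gact τ σ := (hτ σ hσ).symm
  have hmemfix : (w (gact τ₀ σ))⁻¹ * τ * w σ ∈ L.fixingSubgroup := by
    rw [hρ]; exact conj_mem_fixingSubgroup w hw1 τ σ
  erw [dif_pos hmemfix]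
  have hee : (w (gact τ σ))⁻¹ * τ * w σ = (w (gact τ₀ σ))⁻¹ * τ * w σ := by rw [hρ]
  have he : (⟨(w (gact τ σ))⁻¹ * τ * w σ, conj_mem_fixingSubgroup w hw1 τ σ⟩ :
      ↥(L.fixingSubgroup)) = ⟨(w (gact τ₀ σ))⁻¹ * τ * w σ, hmemfix⟩ :=
    Subtype.ext hee
  show (QuotientGroup.mk _ : Gab L) = _
  rw [he, QuotientGroup.mk_inv]
  rfl

end AuxLemmas

set_option synthInstance.maxHeartbeats 1000000 in
set_option maxHeartbeats 2000000 in
theorem statement2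
    (Qbar : Type*) [Field Qbar] [Algebra ℚ Qbar] [IsAlgClosure ℚ Qbar]
    -- complex conjugation on `ℚ̄`, via an embedding of `ℚ̄` into `ℂ`
    (emb : Qbar →+* ℂ) (c : Qbar ≃ₐ[ℚ] Qbar)
    (hc : ∀ x : Qbar, emb (c x) = (starRingEnd ℂ) (emb x))
    (L : IntermediateField ℚ Qbar) [FiniteDimensional ℚ L]
    (hLim : TotallyImaginary c L)
    (Φ : Finset (↥L →+* Qbar)) (hΦ : IsLiftedCMType c L ↑Φ)
    (w : (↥L →+* Qbar) → (Qbar ≃ₐ[ℚ] Qbar)) (hw : IsLiftSystem c L w) :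
    -- (a) `w_{τ∘σ}⁻¹ τ w_σ ∈ G_L`
    (∀ (τ : Qbar ≃ₐ[ℚ] Qbar) (σ : ↥L →+* Qbar),
      (w (gact τ σ))⁻¹ * τ * w σ ∈ L.fixingSubgroup) ∧
    -- (b) the product `∏_{σ ∈ Φ} (w_{τ∘σ}⁻¹ τ w_σ)⁻¹ mod G_L^c` does not depend on the
    -- choice of the system of lifts (order-independence being automatic in `G_L^{ab}`)
    (∀ (w₁ w₂ : (↥L →+* Qbar) → (Qbar ≃ₐ[ℚ] Qbar))
        (h₁ : IsLiftSystem c L w₁) (h₂ : IsLiftSystem c L w₂) (τ : Qbar ≃ₐ[ℚ] Qbar),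
      ∏ σ ∈ Φ, trTerm w₁ h₁.1 τ σ = ∏ σ ∈ Φ, trTerm w₂ h₂.1 τ σ) ∧
    -- (c) `tr_{L,Φ} : G_ℚ → G_L^{ab}` is continuous
    Continuous (fun τ : Qbar ≃ₐ[ℚ] Qbar => ∏ σ ∈ Φ, trTerm w hw.1 τ σ) := by
  have hcc : ∀ x : Qbar, c (c x) = x := by
    intro x
    apply emb.injective
    rw [hc, hc, Complex.conj_conj]
  exact ⟨conj_mem_fixingSubgroup w hw.1,
    fun w₁ w₂ h₁ h₂ τ => tr_indep c hcc L Φ hΦ w₁ w₂ h₁ h₂ τ,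
    tr_continuous L Φ w hw.1⟩
end

section
/- Let $L \subseteq \overline{\mathbb{Q}}$ be a totally imaginary number field with CM-type $\Phi$ lifted from a CM-subfield, and let $E \subseteq \overline{\mathbb{Q}}$ be the fixed field of the stabilizer $\{\tau \in G_{\mathbb{Q}} : \tau\Phi = \Phi\}$ (the reflex field). Then the restriction of $\varepsilon_{\Phi}$ to $G_E = \mathrm{Gal}(\overline{\mathbb{Q}}/E)$ is a continuous group homomorphism $\varepsilon_{\Phi} : G_E \to \{\pm 1\}$ (Krull topology on $G_E$, discrete topology on $\{\pm 1\}$). -/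
/-!
STATEMENT 6: Let `L ⊆ ℚ̄` be a totally imaginary number field with CM-type `Φ` lifted
from a CM-subfield, and let `E ⊆ ℚ̄` be the fixed field of the stabilizer
`{τ ∈ G_ℚ : τΦ = Φ}` (the reflex field).  Then the restriction of `ε_Φ` to
`G_E = Gal(ℚ̄/E)` is a continuous group homomorphism `ε_Φ : G_E → {±1}` (Krull
topology on `G_E`, discrete topology on `{±1} = ℤˣ`).

For a lifted CM-type `Φ`, `ε_Φ(τ) ∈ {±1}` is the sign of the permutation of the orbit
set `⟨c⟩\J_L` given by `⟨c⟩\J_L ≅ Φ → τΦ → ⟨c⟩\J_L`; conjugating by the bijection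
`Φ ≅ ⟨c⟩\J_L`, this is the sign of the permutation of `Φ` sending `σ ∈ Φ` to the
unique element of `Φ` in the orbit `{τ∘σ, c∘τ∘σ}` (with junk value `1` in the
degenerate case where this is not a permutation, which does not occur here).
`ℚ̄` is an algebraic closure of `ℚ` with an embedding `emb` into `ℂ`, and `c` is
complex conjugation restricted to `ℚ̄`.
-/

open scoped Classical

variable {Qbar : Type*} [Field Qbar] [Algebra ℚ Qbar]

/-- the representative in `Ψ` of the conjugation-orbit of `τ∘σ` -/
noncomputable def epsFun (c τ : Qbar ≃ₐ[ℚ] Qbar) {L : IntermediateField ℚ Qbar}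
    (Ψ : Finset (↥L →+* Qbar)) (σ : ↥L →+* Qbar) : ↥L →+* Qbar :=
  if gact τ σ ∈ Ψ then gact τ σ else gact c (gact τ σ)

/-- the sign `ε_Ψ(τ) ∈ {±1}`: the sign of the permutation of `Ψ` (equivalently, of the
orbit set `⟨c⟩\J_L`) induced by `σ ↦ τ∘σ` followed by taking `Ψ`-representatives -/
noncomputable def eps (c : Qbar ≃ₐ[ℚ] Qbar) {L : IntermediateField ℚ Qbar}
    (Ψ : Finset (↥L →+* Qbar)) (τ : Qbar ≃ₐ[ℚ] Qbar) : ℤˣ :=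
  if h : ∃ e : Equiv.Perm {x // x ∈ Ψ},
      ∀ x : {x // x ∈ Ψ}, (e x : ↥L →+* Qbar) = epsFun c τ Ψ (x : ↥L →+* Qbar)
  then Equiv.Perm.sign h.choose
  else 1

/-- the stabilizer `{τ ∈ G_ℚ : τ ∘ Φ = Φ}` of a set of embeddings `Φ ⊆ J_F` -/
def setStab {F : IntermediateField ℚ Qbar} (Φ : Set (↥F →+* Qbar)) :
    Subgroup (Qbar ≃ₐ[ℚ] Qbar) where
  carrier := {τ | gact τ '' Φ = Φ}
  one_mem' := by
    show gact (1 : Qbar ≃ₐ[ℚ] Qbar) '' Φ = Φ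
    have : gact (1 : Qbar ≃ₐ[ℚ] Qbar) = (id : (↥F →+* Qbar) → _) :=
      funext fun σ => rfl
    rw [this, Set.image_id]
  mul_mem' := by
    intro a b ha hb
    show gact (a * b) '' Φ = Φ
    have : gact (a * b) '' Φ = gact a '' (gact b '' Φ) := by
      rw [Set.image_image]
      exact Set.image_congr fun σ _ => rfl
    rw [this, hb, ha]
  inv_mem' := by
    intro a ha
    show gact a⁻¹ '' Φ = Φ
    conv_lhs => rw [← ha]
    rw [Set.image_image]
    have : ∀ σ ∈ Φ, gact a⁻¹ (gact a σ) = σ := fun σ _ => by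
      show gact (a⁻¹ * a) σ = σ
      rw [inv_mul_cancel]
      rfl
    rw [Set.image_congr this, Set.image_id']


open scoped Pointwise

section AuxProof

lemma gact_mul' {F : IntermediateField ℚ Qbar} (a b : Qbar ≃ₐ[ℚ] Qbar) (σ : ↥F →+* Qbar) :
    gact (a * b) σ = gact a (gact b σ) := RingHom.ext fun _ => rfl

lemma mem_normalClosure_img (L : IntermediateField ℚ Qbar) (σ : ↥L →+* Qbar) (x : ↥L) :
    σ x ∈ IntermediateField.normalClosure ℚ ↥L Qbar :=
  le_iSup (fun f : ↥L →ₐ[ℚ] Qbar => f.fieldRange) σ.toRatAlgHom ⟨x, rfl⟩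

lemma gact_fix {L : IntermediateField ℚ Qbar} {ν : Qbar ≃ₐ[ℚ] Qbar}
    (hν : ν ∈ (IntermediateField.normalClosure ℚ ↥L Qbar).fixingSubgroup) (σ : ↥L →+* Qbar) :
    gact ν σ = σ :=
  RingHom.ext fun x =>
    ((IntermediateField.normalClosure ℚ ↥L Qbar).mem_fixingSubgroup_iff ν).mp hν (σ x)
      (mem_normalClosure_img L σ x)

lemma eps_eq_sign (c τ : Qbar ≃ₐ[ℚ] Qbar) {L : IntermediateField ℚ Qbar}
    (Φ : Finset (↥L →+* Qbar)) (e : Equiv.Perm {x // x ∈ Φ})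
    (he : ∀ x : {x // x ∈ Φ}, (e x : ↥L →+* Qbar) = epsFun c τ Φ (x : ↥L →+* Qbar)) :
    eps c Φ τ = Equiv.Perm.sign e := by
  have h : ∃ e' : Equiv.Perm {x // x ∈ Φ},
      ∀ x : {x // x ∈ Φ}, (e' x : ↥L →+* Qbar) = epsFun c τ Φ (x : ↥L →+* Qbar) := ⟨e, he⟩
  rw [eps, dif_pos h]
  exact congrArg _ (Equiv.ext fun x => Subtype.ext ((h.choose_spec x).trans (he x).symm))

lemma eps_stab (c : Qbar ≃ₐ[ℚ] Qbar) {L : IntermediateField ℚ Qbar}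
    (Φ : Finset (↥L →+* Qbar)) {τ : Qbar ≃ₐ[ℚ] Qbar}
    (hτ : ∀ x ∈ Φ, gact τ x ∈ Φ) :
    ∃ e : Equiv.Perm {x // x ∈ Φ},
      (∀ x : {x // x ∈ Φ}, (e x : ↥L →+* Qbar) = gact τ (x : ↥L →+* Qbar)) ∧
      eps c Φ τ = Equiv.Perm.sign e := by
  have hinj : Function.Injective
      (fun x : {x // x ∈ Φ} => (⟨gact τ x, hτ x x.2⟩ : {x // x ∈ Φ})) := by
    intro a b hab
    apply Subtype.ext
    have h2 : gact τ (a : ↥L →+* Qbar) = gact τ (b : ↥L →+* Qbar) :=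
      congrArg Subtype.val hab
    have h3 := congrArg (gact τ⁻¹) h2
    rw [← gact_mul', ← gact_mul', inv_mul_cancel] at h3
    exact h3
  let e := Equiv.ofBijective _ (Finite.injective_iff_bijective.mp hinj)
  refine ⟨e, fun x => rfl, ?_⟩
  apply eps_eq_sign
  intro x
  show gact τ (x : ↥L →+* Qbar) = epsFun c τ Φ (x : ↥L →+* Qbar)
  simp only [epsFun]
  rw [if_pos (hτ x x.2)]

lemma fd_congr {E : Type*} [AddCommGroup E] {m1 m2 : Module ℚ E}
    (h : @FiniteDimensional ℚ E _ _ m1) : @FiniteDimensional ℚ E _ _ m2 := by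
  cases Subsingleton.elim m1 m2; exact h

lemma normal_congr {E : Type*} [Field E] {a1 a2 : Algebra ℚ E}
    (h : @Normal ℚ E _ _ a1) : @Normal ℚ E _ _ a2 := by
  cases Subsingleton.elim a1 a2; exact h

lemma fix_le_setStab [IsAlgClosure ℚ Qbar] (L : IntermediateField ℚ Qbar)
    [FiniteDimensional ℚ L] (Φ : Set (↥L →+* Qbar)) {τ : Qbar ≃ₐ[ℚ] Qbar}
    (hτ : τ ∈ (IntermediateField.fixedField (setStab Φ)).fixingSubgroup) :
    τ ∈ setStab Φ := by
  set M := IntermediateField.normalClosure ℚ ↥L Qbar with hMdef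
  have hfdM := @normalClosure.is_finiteDimensional ℚ ↥L Qbar _ _ _ _ _
    (fd_congr ‹FiniteDimensional ℚ ↥L›)
  haveI : Normal ℚ ↥M := normal_congr (normalClosure.normal ℚ ↥L Qbar)
  let π : (Qbar ≃ₐ[ℚ] Qbar) →* ↥M ≃ₐ[ℚ] ↥M := AlgEquiv.restrictNormalHom ↥M
  have hπ : ∀ (g : Qbar ≃ₐ[ℚ] Qbar) (x : ↥M), ((π g x : ↥M) : Qbar) = g x :=
    fun g x => AlgEquiv.restrictNormalHom_apply M g x
  set H := (setStab Φ).map π with hHdef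
  -- elements of `M` fixed by `H` lie in the reflex field
  have hsub : ∀ y : ↥M, y ∈ IntermediateField.fixedField H →
      (y : Qbar) ∈ IntermediateField.fixedField (setStab Φ) := by
    intro y hy g
    have hmem : π (g : Qbar ≃ₐ[ℚ] Qbar) ∈ H := ⟨(g : Qbar ≃ₐ[ℚ] Qbar), g.2, rfl⟩
    have h2 : π (g : Qbar ≃ₐ[ℚ] Qbar) y = y := hy ⟨π (g : Qbar ≃ₐ[ℚ] Qbar), hmem⟩
    show (g : Qbar ≃ₐ[ℚ] Qbar) (y : Qbar) = (y : Qbar)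
    calc (g : Qbar ≃ₐ[ℚ] Qbar) (y : Qbar) = ((π (g : Qbar ≃ₐ[ℚ] Qbar) y : ↥M) : Qbar) :=
          (hπ _ y).symm
      _ = (y : Qbar) := congrArg _ h2
  -- `π τ` fixes the fixed field of `H`
  have hπτ : π τ ∈ IntermediateField.fixingSubgroup (IntermediateField.fixedField H) := by
    rw [IntermediateField.mem_fixingSubgroup_iff]
    intro y hy
    apply Subtype.coe_injective
    calc ((π τ y : ↥M) : Qbar) = τ (y : Qbar) := hπ τ y
      _ = (y : Qbar) := hτ ⟨(y : Qbar), hsub y hy⟩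
  rw [@IntermediateField.fixingSubgroup_fixedField ℚ _ ↥M _ _ H (fd_congr hfdM)] at hπτ
  obtain ⟨s, hs, hsEq⟩ := hπτ
  have hgact : ∀ σ : ↥L →+* Qbar, gact τ σ = gact s σ := by
    intro σ
    refine RingHom.ext fun x => ?_
    have hmem : σ x ∈ M := mem_normalClosure_img L σ x
    show τ (σ x) = s (σ x)
    calc τ (σ x) = ((π τ ⟨σ x, hmem⟩ : ↥M) : Qbar) := (hπ τ ⟨σ x, hmem⟩).symm
      _ = ((π s ⟨σ x, hmem⟩ : ↥M) : Qbar) := by rw [hsEq]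
      _ = s (σ x) := hπ s ⟨σ x, hmem⟩
  show gact τ '' Φ = Φ
  rw [Set.image_congr fun σ _ => hgact σ]
  exact hs

end AuxProof

theorem statement6
    (Qbar : Type*) [Field Qbar] [Algebra ℚ Qbar] [IsAlgClosure ℚ Qbar]
    -- complex conjugation on `ℚ̄`, via an embedding of `ℚ̄` into `ℂ`
    (emb : Qbar →+* ℂ) (c : Qbar ≃ₐ[ℚ] Qbar)
    (hc : ∀ x : Qbar, emb (c x) = (starRingEnd ℂ) (emb x))
    (L : IntermediateField ℚ Qbar) [FiniteDimensional ℚ L]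
    (hLim : TotallyImaginary c L)
    (Φ : Finset (↥L →+* Qbar)) (hΦ : IsLiftedCMType c L ↑Φ)
    -- `E` is the reflex field: the fixed field of the stabilizer of `Φ`
    (E : IntermediateField ℚ Qbar)
    (hE : E = IntermediateField.fixedField (setStab (↑Φ : Set (↥L →+* Qbar)))) :
    -- `ε_Φ` restricted to `G_E` is a group homomorphism ...
    (∀ τ₁ τ₂ : Qbar ≃ₐ[ℚ] Qbar,
      τ₁ ∈ E.fixingSubgroup → τ₂ ∈ E.fixingSubgroup →
      eps c Φ (τ₁ * τ₂) = eps c Φ τ₁ * eps c Φ τ₂) ∧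
    -- ... and it is continuous
    Continuous (fun τ : ↥(E.fixingSubgroup) => eps c Φ (τ : Qbar ≃ₐ[ℚ] Qbar)) := by
  have hstab : ∀ τ : Qbar ≃ₐ[ℚ] Qbar, τ ∈ E.fixingSubgroup →
      τ ∈ setStab ((Φ : Set (↥L →+* Qbar))) := by
    intro τ hτ
    exact fix_le_setStab L _ (by rw [← hE]; exact hτ)
  have hmem : ∀ τ : Qbar ≃ₐ[ℚ] Qbar, τ ∈ E.fixingSubgroup →
      ∀ x ∈ Φ, gact τ x ∈ Φ := by
    intro τ hτ x hx
    have h1 : gact τ '' (Φ : Set (↥L →+* Qbar)) = (Φ : Set (↥L →+* Qbar)) := hstab τ hτ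
    have := h1 ▸ Set.mem_image_of_mem (gact τ) (Finset.mem_coe.mpr hx)
    exact Finset.mem_coe.mp this
  constructor
  · intro τ₁ τ₂ h1 h2
    obtain ⟨e₁, he₁, hs₁⟩ := eps_stab c Φ (hmem τ₁ h1)
    obtain ⟨e₂, he₂, hs₂⟩ := eps_stab c Φ (hmem τ₂ h2)
    have h12 := hmem (τ₁ * τ₂) (mul_mem h1 h2)
    have key : eps c Φ (τ₁ * τ₂) = Equiv.Perm.sign (e₁ * e₂) := by
      apply eps_eq_sign
      intro x
      show ((e₁ (e₂ x) : ↥L →+* Qbar)) = epsFun c (τ₁ * τ₂) Φ (x : ↥L →+* Qbar)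
      rw [he₁ (e₂ x), he₂ x, ← gact_mul']
      simp only [epsFun]
      rw [if_pos (h12 _ x.2)]
    rw [key, map_mul, hs₁, hs₂]
  · apply IsLocallyConstant.continuous
    rw [IsLocallyConstant.iff_exists_open]
    intro τ₀
    set N := (IntermediateField.normalClosure ℚ ↥L Qbar).fixingSubgroup with hNdef
    have hfdM := @normalClosure.is_finiteDimensional ℚ ↥L Qbar _ _ _ _ _
      (fd_congr ‹FiniteDimensional ℚ ↥L›)
    have hNopen : IsOpen (N : Set (Qbar ≃ₐ[ℚ] Qbar)) :=
      @IntermediateField.fixingSubgroup_isOpen ℚ Qbar _ _ _ _ (fd_congr hfdM)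
    refine ⟨Subtype.val ⁻¹' (((τ₀ : Qbar ≃ₐ[ℚ] Qbar) • (N : Set (Qbar ≃ₐ[ℚ] Qbar)) : Set (Qbar ≃ₐ[ℚ] Qbar))),
      (hNopen.smul _).preimage continuous_subtype_val,
      ⟨1, N.one_mem, mul_one _⟩, ?_⟩
    intro τ hτUV
    obtain ⟨ν, hν, hmul⟩ := hτUV
    have hmul' : (τ₀ : Qbar ≃ₐ[ℚ] Qbar) * ν = (τ : Qbar ≃ₐ[ℚ] Qbar) := hmul
    obtain ⟨e, he, hsign⟩ := eps_stab c Φ (hmem (τ₀ : Qbar ≃ₐ[ℚ] Qbar) τ₀.2)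
    have key : eps c Φ (τ : Qbar ≃ₐ[ℚ] Qbar) = Equiv.Perm.sign e := by
      apply eps_eq_sign
      intro x
      have hg : gact ((τ : Qbar ≃ₐ[ℚ] Qbar)) (x : ↥L →+* Qbar)
          = gact ((τ₀ : Qbar ≃ₐ[ℚ] Qbar)) (x : ↥L →+* Qbar) := by
        rw [← hmul', gact_mul', gact_fix hν]
      rw [he x]
      simp only [epsFun]
      rw [hg, if_pos (hmem _ τ₀.2 _ x.2)]
    show eps c Φ (τ : Qbar ≃ₐ[ℚ] Qbar) = eps c Φ (τ₀ : Qbar ≃ₐ[ℚ] Qbar)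
    rw [key, hsign]
end
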